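/- arXiv:2411.02298 — 2 statements merged into one kernel-verified Lean document; each statement's English description precedes it below -/
import Mathlib

section
/- Fix any γ, ρ, τ > 0 with γ ≤ 0.1, and let μ₁, μ₂, μ₃ ∈ ℝ^d and Σ₁, Σ₂, Σ₃ be d×d symmetric positive definite matrices. Then: (i) if (μ₁, Σ₁) ≈_{γ,ρ,τ} (μ₂, Σ₂), then (μ₂, Σ₂) ≈_{2γ,2ρ,2τ} (μ₁, Σ₁); and (ii) if (μ₁, Σ₁) ≈_{γ,ρ,τ} (μ₂, Σ₂) and (μ₂, Σ₂) ≈_{γ,ρ,τ} (μ₃, Σ₃), then (μ₁, Σ₁) ≈_{4γ,4ρ,4τ} (μ₃, Σ₃). -/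
open MeasureTheory ProbabilityTheory Matrix Real
open scoped ENNReal

noncomputable section

/-- The `ℓ²`-operator norm of a real `d × d` matrix. -/
def opNorm {d : ℕ} (M : Matrix (Fin d) (Fin d) ℝ) : ℝ :=
  ‖(Matrix.toEuclideanCLM (𝕜 := ℝ) M)‖

/-- The Frobenius norm of a real `d × d` matrix. -/
def frobNorm {d : ℕ} (M : Matrix (Fin d) (Fin d) ℝ) : ℝ :=
  Real.sqrt (∑ i, ∑ j, (M i j) ^ 2)

/-- The Euclidean norm of a vector in `ℝ^d`. -/
def vnorm {d : ℕ} (v : Fin d → ℝ) : ℝ := Real.sqrt (∑ i, (v i) ^ 2)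

/-- The positive semidefinite square root of a matrix (junk value `0` if the matrix is not
positive semidefinite). -/
def msqrt {d : ℕ} (S : Matrix (Fin d) (Fin d) ℝ) : Matrix (Fin d) (Fin d) ℝ :=
  letI := Classical.propDecidable S.PosSemidef
  if h : S.PosSemidef then
    (h.1.eigenvectorUnitary : Matrix (Fin d) (Fin d) ℝ) * diagonal ((↑) ∘ (√·) ∘ h.1.eigenvalues) *
      (star (h.1.eigenvectorUnitary : Matrix (Fin d) (Fin d) ℝ))
  else 0

/-- `Σ^{-1/2}`, the inverse of the positive square root. -/
def sqrtInv {d : ℕ} (S : Matrix (Fin d) (Fin d) ℝ) : Matrix (Fin d) (Fin d) ℝ :=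
  (msqrt S)⁻¹

/-- `(μ̂, Σ̂) ≈_{γ,ρ,τ} (μ, Σ)`: spectral, Frobenius, and Mahalanobis closeness. -/
def approx {d : ℕ} (γ ρ τ : ℝ) (p q : (Fin d → ℝ) × Matrix (Fin d) (Fin d) ℝ) : Prop :=
  opNorm (sqrtInv q.2 * p.2 * sqrtInv q.2 - 1) ≤ γ ∧
  frobNorm (sqrtInv q.2 * p.2 * sqrtInv q.2 - 1) ≤ ρ ∧
  vnorm (sqrtInv q.2 *ᵥ (p.1 - q.1)) ≤ τ


/-!
Write `Qᵢ = Σᵢ^{-1/2}`, `Rᵢ = Σᵢ^{1/2}` and `T = Q₃ R₂`. Re-whitening with respect to `Σ₃` instead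
of `Σ₂` gives the exact identities
  `Q₃ Σ₁ Q₃ - I = T (Q₂ Σ₁ Q₂ - I) Tᵀ + (Q₃ Σ₂ Q₃ - I)`,
  `Q₃ (μ₁ - μ₃) = T Q₂ (μ₁ - μ₂) + Q₃ (μ₂ - μ₃)`,
and a congruence by `T` scales both the operator and the Frobenius norm by at most `‖T‖²`.
For transitivity `‖T‖² = ‖Q₃ Σ₂ Q₃‖ ≤ 1 + γ`. For symmetry take `Σ₃ = Σ₁`, so that the left-hand
sides vanish; then `TᵀT = (Q₂ Σ₁ Q₂)⁻¹`, and a Neumann-series bound gives `‖T‖² ≤ (1 - γ)⁻¹`.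
-/

open scoped Matrix.Norms.L2Operator

section NormedRing

variable {R : Type*} [NormedRing R]

lemma norm_le_of_mul_eq_one_of_norm_sub_one_le {a b : R} {γ : ℝ} (hab : a * b = 1)
    (ha : ‖a - 1‖ ≤ γ) (hγ : γ < 1) : ‖b‖ ≤ ‖(1 : R)‖ / (1 - γ) := by
  have hb : b = 1 - (a - 1) * b := by rw [sub_mul, hab, one_mul, sub_sub_cancel]
  have : ‖b‖ ≤ ‖(1 : R)‖ + γ * ‖b‖ :=
    calc ‖b‖ = ‖1 - (a - 1) * b‖ := by rw [← hb]
      _ ≤ ‖(1 : R)‖ + ‖a - 1‖ * ‖b‖ := (norm_sub_le _ _).trans (by gcongr; exact norm_mul_le _ _)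
      _ ≤ ‖(1 : R)‖ + γ * ‖b‖ := by gcongr
  rw [le_div_iff₀ (by linarith)]
  linarith

variable [StarRing R] [NormedStarGroup R]

lemma norm_mul_mul_star_le (t x : R) : ‖t * x * star t‖ ≤ ‖t‖ ^ 2 * ‖x‖ :=
  calc ‖t * x * star t‖ ≤ ‖t‖ * ‖x‖ * ‖star t‖ := norm_mul₃_le
    _ = ‖t‖ ^ 2 * ‖x‖ := by rw [norm_star]; ring

end NormedRing

variable {d : ℕ}

section Norms

lemma opNorm_eq_norm (M : Matrix (Fin d) (Fin d) ℝ) : opNorm M = ‖M‖ := rfl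

lemma l2_opNorm_one_le : ‖(1 : Matrix (Fin d) (Fin d) ℝ)‖ ≤ 1 := by
  rw [Matrix.cstar_norm_def, map_one]
  exact ContinuousLinearMap.norm_id_le

lemma vnorm_eq_norm (v : Fin d → ℝ) : vnorm v = ‖WithLp.toLp 2 v‖ := by
  simp [vnorm, EuclideanSpace.norm_eq]

lemma vnorm_nonneg (v : Fin d → ℝ) : 0 ≤ vnorm v := Real.sqrt_nonneg _

lemma vnorm_add_le (u v : Fin d → ℝ) : vnorm (u + v) ≤ vnorm u + vnorm v := by
  simp only [vnorm_eq_norm, WithLp.toLp_add]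
  exact norm_add_le _ _

lemma vnorm_neg (v : Fin d → ℝ) : vnorm (-v) = vnorm v := by
  simp [vnorm]

lemma vnorm_mulVec_le (M : Matrix (Fin d) (Fin d) ℝ) (v : Fin d → ℝ) :
    vnorm (M *ᵥ v) ≤ ‖M‖ * vnorm v := by
  simp only [vnorm_eq_norm]
  exact Matrix.l2_opNorm_mulVec M (WithLp.toLp 2 v)

lemma frobNorm_eq_norm (X : Matrix (Fin d) (Fin d) ℝ) :
    frobNorm X = ‖(WithLp.toLp 2 (fun p : Fin d × Fin d ↦ X p.1 p.2) :
      EuclideanSpace ℝ (Fin d × Fin d))‖ := by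
  simp [frobNorm, EuclideanSpace.norm_eq, Fintype.sum_prod_type]

lemma frobNorm_nonneg (X : Matrix (Fin d) (Fin d) ℝ) : 0 ≤ frobNorm X := Real.sqrt_nonneg _

lemma frobNorm_add_le (X Y : Matrix (Fin d) (Fin d) ℝ) :
    frobNorm (X + Y) ≤ frobNorm X + frobNorm Y := by
  rw [frobNorm_eq_norm, frobNorm_eq_norm, frobNorm_eq_norm,
    show (fun p : Fin d × Fin d ↦ (X + Y) p.1 p.2) = (fun p ↦ X p.1 p.2) + fun p ↦ Y p.1 p.2
      from rfl, WithLp.toLp_add]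
  exact norm_add_le _ _

lemma frobNorm_neg (X : Matrix (Fin d) (Fin d) ℝ) : frobNorm (-X) = frobNorm X := by
  simp [frobNorm]

lemma frobNorm_conjTranspose (X : Matrix (Fin d) (Fin d) ℝ) : frobNorm Xᴴ = frobNorm X := by
  rw [frobNorm, frobNorm, Finset.sum_comm]
  simp

lemma frobNorm_sq_eq_sum_vnorm_sq (X : Matrix (Fin d) (Fin d) ℝ) :
    frobNorm X ^ 2 = ∑ j, vnorm (Xᵀ j) ^ 2 := by
  rw [frobNorm, Real.sq_sqrt (by positivity), Finset.sum_comm]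
  simp [vnorm, Real.sq_sqrt, Finset.sum_nonneg, sq_nonneg]

lemma frobNorm_mul_le (M X : Matrix (Fin d) (Fin d) ℝ) :
    frobNorm (M * X) ≤ ‖M‖ * frobNorm X := by
  refine le_of_sq_le_sq ?_ (mul_nonneg (norm_nonneg M) (frobNorm_nonneg X))
  rw [mul_pow, frobNorm_sq_eq_sum_vnorm_sq, frobNorm_sq_eq_sum_vnorm_sq, Finset.mul_sum]
  refine Finset.sum_le_sum fun j _ ↦ ?_
  have hcol : (M * X)ᵀ j = M *ᵥ Xᵀ j := by
    ext i
    simp [Matrix.mul_apply, Matrix.mulVec, dotProduct]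
  rw [← mul_pow, hcol]
  exact pow_le_pow_left₀ (vnorm_nonneg _) (vnorm_mulVec_le _ _) 2

lemma frobNorm_mul_star_le (X T : Matrix (Fin d) (Fin d) ℝ) :
    frobNorm (X * star T) ≤ frobNorm X * ‖T‖ := by
  rw [← frobNorm_conjTranspose, Matrix.conjTranspose_mul, Matrix.star_eq_conjTranspose,
    Matrix.conjTranspose_conjTranspose, mul_comm, ← frobNorm_conjTranspose X]
  exact frobNorm_mul_le _ _

lemma frobNorm_mul_mul_star_le (T X : Matrix (Fin d) (Fin d) ℝ) :
    frobNorm (T * X * star T) ≤ ‖T‖ ^ 2 * frobNorm X :=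
  calc frobNorm (T * X * star T) ≤ frobNorm (T * X) * ‖T‖ := frobNorm_mul_star_le _ _
    _ ≤ ‖T‖ * frobNorm X * ‖T‖ := by gcongr; exact frobNorm_mul_le _ _
    _ = ‖T‖ ^ 2 * frobNorm X := by ring

end Norms

section SquareRoot

variable {S : Matrix (Fin d) (Fin d) ℝ}

lemma isHermitian_msqrt (S : Matrix (Fin d) (Fin d) ℝ) : (msqrt S).IsHermitian := by
  unfold msqrt
  split_ifs
  · exact isHermitian_mul_mul_conjTranspose _
      (isHermitian_diagonal_of_self_adjoint _ (by ext; simp))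
  · exact isHermitian_zero

lemma isHermitian_sqrtInv (S : Matrix (Fin d) (Fin d) ℝ) : (sqrtInv S).IsHermitian :=
  (isHermitian_msqrt S).inv

lemma msqrt_mul_msqrt (h : S.PosDef) : msqrt S * msqrt S = S := by
  rw [msqrt, dif_pos h.posSemidef]
  have hU : star (h.posSemidef.1.eigenvectorUnitary : Matrix (Fin d) (Fin d) ℝ) *
      (h.posSemidef.1.eigenvectorUnitary : Matrix (Fin d) (Fin d) ℝ) = 1 :=
    Unitary.coe_star_mul_self _
  conv_rhs => rw [h.posSemidef.1.spectral_theorem, Unitary.conjStarAlgAut_apply]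
  simp only [mul_assoc]
  rw [← mul_assoc (star _) _ _, hU, one_mul, ← mul_assoc (diagonal _) (diagonal _) _,
    diagonal_mul_diagonal]
  congr 3
  funext i
  simp [Real.mul_self_sqrt (h.posSemidef.eigenvalues_nonneg i)]

lemma isUnit_det_msqrt (h : S.PosDef) : IsUnit (msqrt S).det := by
  have : IsUnit ((msqrt S).det * (msqrt S).det) := by
    rw [← det_mul, msqrt_mul_msqrt h]
    exact h.isUnit.map detMonoidHom
  exact isUnit_of_mul_isUnit_left this

lemma sqrtInv_mul_msqrt (h : S.PosDef) : sqrtInv S * msqrt S = 1 :=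
  nonsing_inv_mul _ (isUnit_det_msqrt h)

lemma msqrt_mul_sqrtInv (h : S.PosDef) : msqrt S * sqrtInv S = 1 :=
  mul_nonsing_inv _ (isUnit_det_msqrt h)

lemma sqrtInv_mul_sqrtInv (h : S.PosDef) : sqrtInv S * sqrtInv S = S⁻¹ := by
  rw [sqrtInv, ← Matrix.mul_inv_rev, msqrt_mul_msqrt h]

lemma sqrtInv_mul_self_mul_sqrtInv (h : S.PosDef) : sqrtInv S * S * sqrtInv S = 1 := by
  nth_rw 2 [← msqrt_mul_msqrt h]
  rw [← mul_assoc, sqrtInv_mul_msqrt h, one_mul, msqrt_mul_sqrtInv h]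

end SquareRoot

section ChangeOfReference

variable {S₁ S₂ S₃ : Matrix (Fin d) (Fin d) ℝ}

lemma star_sqrtInv_mul_msqrt (S₃ S₂ : Matrix (Fin d) (Fin d) ℝ) :
    star (sqrtInv S₃ * msqrt S₂) = msqrt S₂ * sqrtInv S₃ := by
  rw [star_mul, star_eq_conjTranspose, star_eq_conjTranspose, (isHermitian_msqrt S₂).eq,
    (isHermitian_sqrtInv S₃).eq]

lemma sqrtInv_conj_sub_one_eq (h₂ : S₂.PosDef) (S₁ S₃ : Matrix (Fin d) (Fin d) ℝ) :
    sqrtInv S₃ * S₁ * sqrtInv S₃ - 1 =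
      sqrtInv S₃ * msqrt S₂ * (sqrtInv S₂ * S₁ * sqrtInv S₂ - 1) * star (sqrtInv S₃ * msqrt S₂) +
        (sqrtInv S₃ * S₂ * sqrtInv S₃ - 1) := by
  have e₁ : ∀ Y, msqrt S₂ * (sqrtInv S₂ * Y) = Y := fun Y ↦ by
    rw [← mul_assoc, msqrt_mul_sqrtInv h₂, one_mul]
  have e₂ : ∀ Y, sqrtInv S₂ * (msqrt S₂ * Y) = Y := fun Y ↦ by
    rw [← mul_assoc, sqrtInv_mul_msqrt h₂, one_mul]
  have e₃ : ∀ Y, msqrt S₂ * (msqrt S₂ * Y) = S₂ * Y := fun Y ↦ by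
    rw [← mul_assoc, msqrt_mul_msqrt h₂]
  rw [star_sqrtInv_mul_msqrt]
  simp only [mul_sub, sub_mul, mul_one, mul_assoc, e₁, e₂, e₃]
  abel

lemma sqrtInv_mulVec_sub_eq (h₂ : S₂.PosDef) (S₃ : Matrix (Fin d) (Fin d) ℝ)
    (μ₁ μ₂ μ₃ : Fin d → ℝ) :
    sqrtInv S₃ *ᵥ (μ₁ - μ₃) =
      (sqrtInv S₃ * msqrt S₂) *ᵥ (sqrtInv S₂ *ᵥ (μ₁ - μ₂)) + sqrtInv S₃ *ᵥ (μ₂ - μ₃) := by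
  rw [mulVec_mulVec, mul_assoc, msqrt_mul_sqrtInv h₂, mul_one, ← mulVec_add, sub_add_sub_cancel]

lemma norm_sqrtInv_mul_msqrt_sq (h₂ : S₂.PosDef) (S₃ : Matrix (Fin d) (Fin d) ℝ) :
    ‖sqrtInv S₃ * msqrt S₂‖ ^ 2 = ‖sqrtInv S₃ * S₂ * sqrtInv S₃‖ := by
  rw [sq, ← CStarRing.norm_self_mul_star, star_sqrtInv_mul_msqrt, mul_assoc, ← mul_assoc (msqrt S₂),
    msqrt_mul_msqrt h₂, ← mul_assoc]

end ChangeOfReference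

section Approx

variable {γ ρ τ γ' ρ' τ' c : ℝ} {μ₁ μ₂ μ₃ : Fin d → ℝ} {S₁ S₂ S₃ : Matrix (Fin d) (Fin d) ℝ}

lemma approx_mono {p q : (Fin d → ℝ) × Matrix (Fin d) (Fin d) ℝ} (h : approx γ ρ τ p q)
    (hγ : γ ≤ γ') (hρ : ρ ≤ ρ') (hτ : τ ≤ τ') : approx γ' ρ' τ' p q :=
  ⟨h.1.trans hγ, h.2.1.trans hρ, h.2.2.trans hτ⟩

lemma norm_sqrtInv_mul_msqrt_sq_le_one_add (h₂ : S₂.PosDef)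
    (h₂₃ : approx γ ρ τ (μ₂, S₂) (μ₃, S₃)) : ‖sqrtInv S₃ * msqrt S₂‖ ^ 2 ≤ 1 + γ := by
  rw [norm_sqrtInv_mul_msqrt_sq h₂, ← sub_add_cancel (sqrtInv S₃ * S₂ * sqrtInv S₃) 1, add_comm 1 γ]
  exact (norm_add_le _ _).trans (add_le_add h₂₃.1 l2_opNorm_one_le)

lemma approx_trans_of_norm_le (h₂ : S₂.PosDef) (h₁₂ : approx γ ρ τ (μ₁, S₁) (μ₂, S₂))
    (h₂₃ : approx γ' ρ' τ' (μ₂, S₂) (μ₃, S₃)) (hc : ‖sqrtInv S₃ * msqrt S₂‖ ≤ c) :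
    approx (c ^ 2 * γ + γ') (c ^ 2 * ρ + ρ') (c * τ + τ') (μ₁, S₁) (μ₃, S₃) := by
  obtain ⟨hop₁₂, hfr₁₂, hmean₁₂⟩ := h₁₂
  obtain ⟨hop₂₃, hfr₂₃, hmean₂₃⟩ := h₂₃
  set T := sqrtInv S₃ * msqrt S₂
  refine ⟨?_, ?_, ?_⟩
  · rw [opNorm_eq_norm, sqrtInv_conj_sub_one_eq h₂]
    calc _ ≤ ‖T * (sqrtInv S₂ * S₁ * sqrtInv S₂ - 1) * star T‖ +
          ‖sqrtInv S₃ * S₂ * sqrtInv S₃ - 1‖ := norm_add_le _ _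
      _ ≤ ‖T‖ ^ 2 * ‖sqrtInv S₂ * S₁ * sqrtInv S₂ - 1‖ + ‖sqrtInv S₃ * S₂ * sqrtInv S₃ - 1‖ := by
          gcongr; exact norm_mul_mul_star_le _ _
      _ ≤ c ^ 2 * γ + γ' := by gcongr <;> assumption
  · rw [sqrtInv_conj_sub_one_eq h₂]
    calc _ ≤ frobNorm (T * (sqrtInv S₂ * S₁ * sqrtInv S₂ - 1) * star T) +
          frobNorm (sqrtInv S₃ * S₂ * sqrtInv S₃ - 1) := frobNorm_add_le _ _
      _ ≤ ‖T‖ ^ 2 * frobNorm (sqrtInv S₂ * S₁ * sqrtInv S₂ - 1) +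
          frobNorm (sqrtInv S₃ * S₂ * sqrtInv S₃ - 1) := by
          gcongr; exact frobNorm_mul_mul_star_le _ _
      _ ≤ c ^ 2 * ρ + ρ' := by gcongr; exact frobNorm_nonneg _
  · dsimp only
    rw [sqrtInv_mulVec_sub_eq h₂ S₃ μ₁ μ₂ μ₃]
    calc _ ≤ vnorm (T *ᵥ (sqrtInv S₂ *ᵥ (μ₁ - μ₂))) + vnorm (sqrtInv S₃ *ᵥ (μ₂ - μ₃)) :=
          vnorm_add_le _ _
      _ ≤ ‖T‖ * vnorm (sqrtInv S₂ *ᵥ (μ₁ - μ₂)) + vnorm (sqrtInv S₃ *ᵥ (μ₂ - μ₃)) := by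
          gcongr; exact vnorm_mulVec_le _ _
      _ ≤ c * τ + τ' := by
          have hc₀ : 0 ≤ c := (norm_nonneg _).trans hc
          gcongr; exact vnorm_nonneg _

lemma norm_sqrtInv_mul_msqrt_sq_le_inv_one_sub (h₁ : S₁.PosDef) (h₂ : S₂.PosDef)
    (h₁₂ : approx γ ρ τ (μ₁, S₁) (μ₂, S₂)) (hγ : γ < 1) :
    ‖sqrtInv S₁ * msqrt S₂‖ ^ 2 ≤ (1 - γ)⁻¹ := by
  set T := sqrtInv S₁ * msqrt S₂
  have hinv : sqrtInv S₂ * S₁ * sqrtInv S₂ * (star T * T) = 1 := by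
    have : star T * T = msqrt S₂ * S₁⁻¹ * msqrt S₂ := by
      simp only [T, star_sqrtInv_mul_msqrt, mul_assoc, ← mul_assoc (sqrtInv S₁),
        sqrtInv_mul_sqrtInv h₁]
    calc sqrtInv S₂ * S₁ * sqrtInv S₂ * (star T * T)
        = sqrtInv S₂ * (S₁ * ((sqrtInv S₂ * msqrt S₂) * S₁⁻¹) * msqrt S₂) := by
          simp only [this, mul_assoc]
      _ = 1 := by
          rw [sqrtInv_mul_msqrt h₂, one_mul,
            mul_nonsing_inv _ ((isUnit_iff_isUnit_det _).mp h₁.isUnit), one_mul,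
            sqrtInv_mul_msqrt h₂]
  rw [sq, ← CStarRing.norm_star_mul_self]
  calc ‖star T * T‖ ≤ ‖(1 : Matrix (Fin d) (Fin d) ℝ)‖ / (1 - γ) :=
        norm_le_of_mul_eq_one_of_norm_sub_one_le hinv h₁₂.1 hγ
    _ ≤ (1 - γ)⁻¹ := by rw [inv_eq_one_div]; gcongr; exact l2_opNorm_one_le

lemma approx_symm_of_norm_le (h₁ : S₁.PosDef) (h₂ : S₂.PosDef)
    (h₁₂ : approx γ ρ τ (μ₁, S₁) (μ₂, S₂)) (hc : ‖sqrtInv S₁ * msqrt S₂‖ ≤ c) :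
    approx (c ^ 2 * γ) (c ^ 2 * ρ) (c * τ) (μ₂, S₂) (μ₁, S₁) := by
  obtain ⟨hop, hfr, hmean⟩ := h₁₂
  set T := sqrtInv S₁ * msqrt S₂
  have hcov :
      sqrtInv S₁ * S₂ * sqrtInv S₁ - 1 = -(T * (sqrtInv S₂ * S₁ * sqrtInv S₂ - 1) * star T) := by
    have := sqrtInv_conj_sub_one_eq h₂ S₁ S₁
    rw [sqrtInv_mul_self_mul_sqrtInv h₁, sub_self] at this
    exact eq_neg_of_add_eq_zero_right this.symm
  have hmean' : sqrtInv S₁ *ᵥ (μ₂ - μ₁) = -(T *ᵥ (sqrtInv S₂ *ᵥ (μ₁ - μ₂))) := by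
    have := sqrtInv_mulVec_sub_eq h₂ S₁ μ₁ μ₂ μ₁
    rw [sub_self, mulVec_zero] at this
    exact eq_neg_of_add_eq_zero_right this.symm
  refine ⟨?_, ?_, ?_⟩
  · rw [opNorm_eq_norm, hcov, norm_neg]
    calc _ ≤ ‖T‖ ^ 2 * ‖sqrtInv S₂ * S₁ * sqrtInv S₂ - 1‖ := norm_mul_mul_star_le _ _
      _ ≤ c ^ 2 * γ := by gcongr; exact hop
  · rw [hcov, frobNorm_neg]
    calc _ ≤ ‖T‖ ^ 2 * frobNorm (sqrtInv S₂ * S₁ * sqrtInv S₂ - 1) := frobNorm_mul_mul_star_le _ _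
      _ ≤ c ^ 2 * ρ := by gcongr; exact frobNorm_nonneg _
  · dsimp only
    rw [hmean', vnorm_neg]
    calc _ ≤ ‖T‖ * vnorm (sqrtInv S₂ *ᵥ (μ₁ - μ₂)) := vnorm_mulVec_le _ _
      _ ≤ c * τ := by
          have hc₀ : 0 ≤ c := (norm_nonneg _).trans hc
          gcongr; exact vnorm_nonneg _

end Approx

theorem approx_symm_trans_general {d : ℕ} (γ ρ τ : ℝ) (hγ : γ ≤ 0.1)
    (hτ : 0 < τ)
    (μ₁ μ₂ μ₃ : Fin d → ℝ) (S₁ S₂ S₃ : Matrix (Fin d) (Fin d) ℝ)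
    (h₁ : S₁.PosDef) (h₂ : S₂.PosDef) :
    (approx γ ρ τ (μ₁, S₁) (μ₂, S₂) → approx (2 * γ) (2 * ρ) (2 * τ) (μ₂, S₂) (μ₁, S₁)) ∧
    (approx γ ρ τ (μ₁, S₁) (μ₂, S₂) → approx γ ρ τ (μ₂, S₂) (μ₃, S₃) →
      approx (4 * γ) (4 * ρ) (4 * τ) (μ₁, S₁) (μ₃, S₃)) := by
  norm_num at hγ
  refine ⟨fun h₁₂ ↦ ?_, fun h₁₂ h₂₃ ↦ ?_⟩
  · have hT : ‖sqrtInv S₁ * msqrt S₂‖ ≤ √2 := by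
      rw [Real.le_sqrt (norm_nonneg _) zero_le_two]
      refine (norm_sqrtInv_mul_msqrt_sq_le_inv_one_sub h₁ h₂ h₁₂ (by linarith)).trans ?_
      rw [inv_le_comm₀ (by linarith) two_pos]
      linarith
    have h₂₁ := approx_symm_of_norm_le h₁ h₂ h₁₂ hT
    rw [Real.sq_sqrt zero_le_two] at h₂₁
    refine approx_mono h₂₁ le_rfl le_rfl ?_
    gcongr
    exact Real.sqrt_le_iff.mpr ⟨by norm_num, by norm_num⟩
  · have hT : ‖sqrtInv S₃ * msqrt S₂‖ ≤ √3 := by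
      rw [Real.le_sqrt (norm_nonneg _) zero_le_three]
      linarith [norm_sqrtInv_mul_msqrt_sq_le_one_add h₂ h₂₃]
    have h₁₃ := approx_trans_of_norm_le h₂ h₁₂ h₂₃ hT
    rw [Real.sq_sqrt zero_le_three] at h₁₃
    have hsqrt3 : √3 * τ ≤ 3 * τ := by
      gcongr
      exact Real.sqrt_le_iff.mpr ⟨by norm_num, by norm_num⟩
    exact approx_mono h₁₃ (by linarith) (by linarith) (by linarith)

/-- Proposition: approximate symmetry and transitivity of `≈_{γ,ρ,τ}`. -/
theorem approx_symm_trans {d : ℕ} (γ ρ τ : ℝ) (hγ0 : 0 < γ) (hγ : γ ≤ 0.1)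
    (hρ : 0 < ρ) (hτ : 0 < τ)
    (μ₁ μ₂ μ₃ : Fin d → ℝ) (S₁ S₂ S₃ : Matrix (Fin d) (Fin d) ℝ)
    (h₁ : S₁.PosDef) (h₂ : S₂.PosDef) (h₃ : S₃.PosDef) :
    (approx γ ρ τ (μ₁, S₁) (μ₂, S₂) → approx (2 * γ) (2 * ρ) (2 * τ) (μ₂, S₂) (μ₁, S₁)) ∧
    (approx γ ρ τ (μ₁, S₁) (μ₂, S₂) → approx γ ρ τ (μ₂, S₂) (μ₃, S₃) →
      approx (4 * γ) (4 * ρ) (4 * τ) (μ₁, S₁) (μ₃, S₃)) :=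
  approx_symm_trans_general γ ρ τ hγ hτ μ₁ μ₂ μ₃ S₁ S₂ S₃ h₁ h₂

end
end

section
/- Let X, X' ∈ ℝ^n be datasets of size n differing in exactly one entry, and let Y₁ ≤ Y₂ ≤ … ≤ Y_n and Y'₁ ≤ Y'₂ ≤ … ≤ Y'_n be the respective sorted orderings of X and X'. Define the multisets Z = {(Y_j, Y_{j+1} − Y_j) : 1 ≤ j ≤ n−1} and Z' = {(Y'_j, Y'_{j+1} − Y'_j) : 1 ≤ j ≤ n−1} of ordered pairs of reals. Then Z and Z' differ in at most 3 elements: there exist orderings of Z and Z' agreeing in all but at most 3 positions; equivalently, the multiset difference Z \ Z' has cardinality at most 3. -/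
/-!
Both sorted datasets arise by inserting one value (`X i`, resp. `X' i`) into the same sorted
list `l` of the remaining `n - 1` values. Inserting `a` between neighbours `x ≤ y` replaces the
gap `(x, y - x)` by the two gaps `(x, a - x)` and `(a, y - a)`, so the gaps of the enlarged list
exceed those of `l` by at most 2 elements and miss at most 1 of them. The triangle inequality
`s - u ≤ (s - t) + (t - u)` for multiset differences, taken through `t = gaps l`, gives `2 + 1`.
-/

open MeasureTheory ProbabilityTheory Matrix Real
open scoped ENNReal

noncomputable section

/-- The sorted (nondecreasing) list of the entries of a dataset. -/
def sortedOf {n : ℕ} (X : Fin n → ℝ) : List ℝ :=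
  Multiset.sort (↑(List.ofFn X)) (· ≤ ·)


/-- The multiset of pairs `(Y_j, Y_{j+1} - Y_j)` of consecutive elements of a list. -/
def gaps (l : List ℝ) : Multiset (ℝ × ℝ) :=
  ↑(List.zipWith (fun a b => (a, b - a)) l l.tail)

theorem Multiset.sort_cons_eq_orderedInsert {α : Type*} (r : α → α → Prop) [DecidableRel r]
    [IsTrans α r] [Std.Antisymm r] [Std.Total r] (a : α) (s : Multiset α) :
    sort (a ::ₘ s) r = (sort s r).orderedInsert r a :=
  Quot.inductionOn s fun l => by
    simp only [Multiset.quot_mk_to_coe'', Multiset.cons_coe, Multiset.coe_sort,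
      List.mergeSort_eq_insertionSort, List.insertionSort_cons]

theorem List.coe_ofFn_eq_cons_map_erase {α : Type*} {n : ℕ} (X : Fin n → α) (i : Fin n) :
    (ofFn X : Multiset α) = X i ::ₘ (Finset.univ.erase i).val.map X := by
  rw [← Fin.univ_val_map, Finset.erase_val, ← Multiset.map_cons,
    Multiset.cons_erase (Finset.mem_univ_val i)]

theorem Multiset.card_add_tsub_add_le {α : Type*} [DecidableEq α] (s t u : Multiset α) :
    card (s + u - (t + u)) ≤ card s := by
  rw [add_tsub_add_eq_tsub_right]
  exact card_le_card tsub_le_self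

theorem Multiset.card_tsub_le_card_tsub_add_card_tsub {α : Type*} [DecidableEq α]
    (s t u : Multiset α) : card (s - u) ≤ card (s - t) + card (t - u) :=
  (card_le_card tsub_le_tsub_add_tsub).trans_eq (card_add _ _)

theorem gaps_cons_cons (x y : ℝ) (l : List ℝ) :
    gaps (x :: y :: l) = (x, y - x) ::ₘ gaps (y :: l) := rfl

theorem card_gaps_insert_sub_le (l₁ l₂ : List ℝ) (a : ℝ) :
    Multiset.card (gaps (l₁ ++ a :: l₂) - gaps (l₁ ++ l₂)) ≤ 2 ∧
      Multiset.card (gaps (l₁ ++ l₂) - gaps (l₁ ++ a :: l₂)) ≤ 1 := by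
  induction l₁ with
  | nil =>
    cases l₂ with
    | nil => simp [gaps]
    | cons y l₂ =>
      simp [gaps_cons_cons, ← Multiset.singleton_add, tsub_eq_zero_of_le le_add_self]
  | cons x l₁ ih =>
    cases l₁ with
    | nil =>
      cases l₂ with
      | nil => simp [gaps]
      | cons y l₂ =>
        simp only [List.cons_append, List.nil_append, gaps_cons_cons, ← Multiset.singleton_add,
          ← add_assoc]
        exact ⟨(Multiset.card_add_tsub_add_le _ _ _).trans (by simp),
          (Multiset.card_add_tsub_add_le _ _ _).trans (by simp)⟩
    | cons y l₁ =>
      simpa only [List.cons_append, gaps_cons_cons, ← Multiset.singleton_add,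
        add_tsub_add_eq_tsub_left] using ih

theorem card_gaps_orderedInsert_sub_le (r : ℝ → ℝ → Prop) [DecidableRel r] (a : ℝ)
    (l : List ℝ) :
    Multiset.card (gaps (l.orderedInsert r a) - gaps l) ≤ 2 ∧
      Multiset.card (gaps l - gaps (l.orderedInsert r a)) ≤ 1 := by
  have h :=
    card_gaps_insert_sub_le (l.takeWhile fun b => ¬r a b) (l.dropWhile fun b => ¬r a b) a
  rwa [List.takeWhile_append_dropWhile, ← List.orderedInsert_eq_take_drop] at h

theorem sortedOf_eq_orderedInsert {n : ℕ} (X : Fin n → ℝ) (i : Fin n) :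
    sortedOf X = (Multiset.sort ((Finset.univ.erase i).val.map X) (· ≤ ·)).orderedInsert
      (· ≤ ·) (X i) := by
  rw [sortedOf, List.coe_ofFn_eq_cons_map_erase X i, Multiset.sort_cons_eq_orderedInsert]

/-- Lemma: changing one datapoint changes the multiset of consecutive gaps of the
sorted dataset in at most 3 elements. -/
theorem gaps_change_by_three {n : ℕ} (X X' : Fin n → ℝ)
    (h : ∃ i : Fin n, X i ≠ X' i ∧ ∀ j : Fin n, j ≠ i → X j = X' j) :
    Multiset.card (gaps (sortedOf X) - gaps (sortedOf X')) ≤ 3 := by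
  obtain ⟨i, -, hagree⟩ := h
  have hrest : (Finset.univ.erase i).val.map X' = (Finset.univ.erase i).val.map X :=
    Multiset.map_congr rfl fun j hj => (hagree j (Finset.ne_of_mem_erase (s := .univ) hj)).symm
  rw [sortedOf_eq_orderedInsert X i, sortedOf_eq_orderedInsert X' i, hrest]
  set l := Multiset.sort ((Finset.univ.erase i).val.map X) (· ≤ ·)
  calc _ ≤ Multiset.card (gaps (l.orderedInsert (· ≤ ·) (X i)) - gaps l) +
        Multiset.card (gaps l - gaps (l.orderedInsert (· ≤ ·) (X' i))) :=
        Multiset.card_tsub_le_card_tsub_add_card_tsub _ _ _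
    _ ≤ 2 + 1 := add_le_add (card_gaps_orderedInsert_sub_le _ _ l).1
        (card_gaps_orderedInsert_sub_le _ _ l).2

end
end
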